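/- arXiv:1808.01602 — 2 statements merged into one kernel-verified Lean document; each statement's English description precedes it below -/
import Mathlib

section
/- Let y > 0 and a' ≥ 0 be real numbers, and let γ : ℝ → ℍ be the path γ(t) = t + y·i into the upper half-plane. Then the length of γ over [0, a'], measured as the metric variation eVariationOn γ (Set.Icc 0 a') with respect to the hyperbolic metric of ℍ, equals ENNReal.ofReal (a' / y). -/
open scoped UpperHalfPlane

/-!
Two points of the horocycle `Im z = y` at Euclidean distance `d` are at hyperbolic distance
`2 arsinh (d / 2y)`. Since `arsinh x ≤ x`, the path is `1/y`-Lipschitz, which bounds the length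
by `a' / y`. Conversely, the uniform partition of `[0, a']` into `n` pieces gives the lower bound
`n · 2 arsinh (a' / 2ny)`, which tends to `a' / y` because `arsinh' 0 = 1`.
-/

open Real Filter Topology Set

theorem Real.arsinh_le_self {x : ℝ} (hx : 0 ≤ x) : arsinh x ≤ x :=
  calc arsinh x ≤ arsinh (sinh x) := arsinh_le_arsinh.2 (self_le_sinh_iff.2 hx)
    _ = x := arsinh_sinh x

theorem HasDerivAt.tendsto_nat_mul_apply_div {f : ℝ → ℝ} {f' : ℝ} (hf : HasDerivAt f f' 0)
    (hf0 : f 0 = 0) (c : ℝ) : Tendsto (fun n : ℕ ↦ n * f (c / n)) atTop (𝓝 (f' * c)) := by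
  rcases eq_or_ne c 0 with rfl | hc
  · simp [hf0]
  have hcn : Tendsto (fun n : ℕ ↦ c / n) atTop (𝓝[≠] 0) :=
    tendsto_nhdsWithin_of_tendsto_nhds_of_eventually_within _
      (tendsto_const_div_atTop_nhds_zero_nat c)
      (eventually_ne_atTop 0 |>.mono fun n hn ↦ div_ne_zero hc (Nat.cast_ne_zero.2 hn))
  refine ((hf.tendsto_slope_zero.comp hcn).mul_const c).congr' ?_
  filter_upwards [eventually_ne_atTop 0] with n hn
  simp only [Function.comp_apply, zero_add, hf0, sub_zero, smul_eq_mul, inv_div]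
  field_simp

theorem eVariationOn.ofReal_nat_mul_le {E : Type*} [PseudoEMetricSpace E] {f : ℝ → E}
    {φ : ℝ → ℝ} (hf : ∀ s t, s ≤ t → edist (f t) (f s) = ENNReal.ofReal (φ (t - s)))
    {a b : ℝ} (hab : a ≤ b) (n : ℕ) :
    ENNReal.ofReal (n * φ ((b - a) / n)) ≤ eVariationOn f (Icc a b) := by
  set δ := (b - a) / n
  have hδ : 0 ≤ δ := by positivity
  have hnδ : n * δ ≤ b - a := by
    rcases eq_or_ne n 0 with rfl | hn
    · simpa using hab
    · exact (mul_div_cancel₀ _ (Nat.cast_ne_zero.2 hn)).le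
  have hu : Monotone fun i : ℕ ↦ a + i * δ := fun i j hij ↦ by
    dsimp only
    gcongr
  have us : ∀ i ≤ n, a + i * δ ∈ Icc a b := fun i hi ↦ by
    have : (i : ℝ) * δ ≤ n * δ := by gcongr
    constructor <;> nlinarith
  have hstep (i : ℕ) :
      edist (f (a + ↑(i + 1) * δ)) (f (a + i * δ)) = ENNReal.ofReal (φ δ) := by
    rw [hf _ _ (hu i.le_succ)]
    push_cast
    ring_nf
  calc ENNReal.ofReal (n * φ δ)
      = ∑ i ∈ Finset.range n, edist (f (a + ↑(i + 1) * δ)) (f (a + i * δ)) := by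
        simp only [hstep, Finset.sum_const, Finset.card_range, nsmul_eq_mul]
        rw [ENNReal.ofReal_mul n.cast_nonneg, ENNReal.ofReal_natCast]
    _ ≤ eVariationOn f (Icc a b) := eVariationOn.sum_le_of_monotoneOn_Iic (hu.monotoneOn _) us

theorem UpperHalfPlane.dist_of_im_eq {z w : ℍ} (h : z.im = w.im) :
    dist z w = 2 * arsinh (|z.re - w.re| / (2 * z.im)) := by
  rw [dist_eq, ← h, sqrt_mul_self z.im_pos.le, Complex.dist_of_im_eq (by simpa using h),
    Real.dist_eq, coe_re, coe_re]

theorem UpperHalfPlane.dist_le_of_im_eq {z w : ℍ} (h : z.im = w.im) :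
    dist z w ≤ |z.re - w.re| / z.im := by
  have := z.im_pos
  calc dist z w ≤ 2 * (|z.re - w.re| / (2 * z.im)) := by
        rw [dist_of_im_eq h]
        gcongr
        exact arsinh_le_self (by positivity)
    _ = |z.re - w.re| / z.im := by field_simp

theorem stmt_3_general (y : ℝ) (a' : ℝ) (ha' : 0 ≤ a')
    (γ : ℝ → ℍ) (hγ : ∀ t : ℝ, (γ t : ℂ) = t + y * Complex.I) :
    eVariationOn γ (Set.Icc 0 a') = ENNReal.ofReal (a' / y) := by
  have hre (t : ℝ) : (γ t).re = t := by simp [← UpperHalfPlane.coe_re, hγ]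
  have him (t : ℝ) : (γ t).im = y := by simp [← UpperHalfPlane.coe_im, hγ]
  have him_eq (s t : ℝ) : (γ s).im = (γ t).im := by rw [him, him]
  apply le_antisymm
  · have hlip : LipschitzWith (y⁻¹).toNNReal γ := .of_dist_le' fun s t ↦ by
      simpa [hre, him, Real.dist_eq, div_eq_inv_mul] using
        UpperHalfPlane.dist_le_of_im_eq (him_eq s t)
    calc eVariationOn γ (Icc 0 a') ≤ (y⁻¹).toNNReal * eVariationOn id (Icc 0 a') :=
          hlip.lipschitzOnWith.comp_eVariationOn_le (mapsTo_univ _ _)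
      _ = ENNReal.ofReal (a' / y) := by
          change ENNReal.ofReal y⁻¹ * _ = _
          rw [eVariationOn_id_Icc, sub_zero, ← ENNReal.ofReal_mul' ha', inv_mul_eq_div]
  · have hφ : HasDerivAt (fun d ↦ 2 * arsinh (d / (2 * y))) y⁻¹ 0 := by
      refine (((hasDerivAt_id' 0).div_const (2 * y)).arsinh.const_mul 2).congr_deriv ?_
      norm_num
      ring
    have hedist (s t : ℝ) (hst : s ≤ t) :
        edist (γ t) (γ s) = ENNReal.ofReal (2 * arsinh ((t - s) / (2 * y))) := by
      rw [edist_dist, UpperHalfPlane.dist_of_im_eq (him_eq t s), hre, hre, him,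
        abs_of_nonneg (sub_nonneg.2 hst)]
    have hlim := (ENNReal.continuous_ofReal.tendsto _).comp
      (hφ.tendsto_nat_mul_apply_div (by simp) a')
    rw [inv_mul_eq_div] at hlim
    exact le_of_tendsto' hlim fun n ↦ by
      simpa using
        eVariationOn.ofReal_nat_mul_le (φ := fun d ↦ 2 * arsinh (d / (2 * y))) hedist ha' n

/-- The hyperbolic length (total metric variation) of the horizontal horocyclic segment
`t ↦ t + y·i`, `t ∈ [0, a']`, at height `y > 0` in the upper half-plane equals `a' / y`. -/
theorem stmt_3 (y : ℝ) (hy : 0 < y) (a' : ℝ) (ha' : 0 ≤ a')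
    (γ : ℝ → ℍ) (hγ : ∀ t : ℝ, (γ t : ℂ) = t + y * Complex.I) :
    eVariationOn γ (Set.Icc 0 a') = ENNReal.ofReal (a' / y) :=
  stmt_3_general y a' ha' γ hγ
end

section
/- Let R > 0 and define γ : ℝ → ℍ by γ(θ) = (sinh R)·sin θ + ((cosh R) − (sinh R)·cos θ)·i, the Euclidean-circle parametrization of the hyperbolic circle of radius R centered at i ∈ ℍ (note Im γ(θ) = cosh R − sinh R·cos θ > 0). Then the hyperbolic length of this circle, measured as the metric variation eVariationOn γ (Set.Icc 0 (2π)) with respect to the hyperbolic metric of ℍ, equals ENNReal.ofReal (2π·sinh R). -/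
/-!
In the polar angle `φ` about `i`, the chord of the circle between the angles `φ`
and `ψ` has hyperbolic length `2 arsinh (sinh R · |sin ((φ - ψ) / 2)|)`, which depends only on
`φ - ψ`. For a curve whose chords have length `ρ (ψ - φ)` with `ρ h ≤ c h` and `ρ' 0 = c`, the
bound makes the curve `c`-Lipschitz, so its length is at most `c` times the parameter length,
while `n` equally spaced points give `n ρ (L / n) → c L` from below. Here `c = sinh R`, and since
the polar angle is an increasing function of `θ` with derivative `1 / Im γ θ` that maps `[0, 2π]`
onto itself, the parameter interval is `[0, 2π]`.
-/

open scoped UpperHalfPlane Real ENNReal NNReal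

open Real Set Filter Topology

section ChordLength

variable {E : Type*} [PseudoMetricSpace E] {f : ℝ → E} {a b : ℝ}

theorem LipschitzOnWith.eVariationOn_Icc_le {C : ℝ≥0} (hf : LipschitzOnWith C f (Icc a b)) :
    eVariationOn f (Icc a b) ≤ C * ENNReal.ofReal (b - a) := by
  have hid : eVariationOn id (Icc a b) = ENNReal.ofReal (b - a) := by
    rw [← univ_inter (Icc a b)]
    exact (monotone_id.monotoneOn univ).eVariationOn_eq (mem_univ a) (mem_univ b)
  simpa [hid] using hf.comp_eVariationOn_le (mapsTo_id _)

theorem tendsto_natCast_mul_of_hasDerivWithinAt {ρ : ℝ → ℝ} {c L : ℝ}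
    (hρ : HasDerivWithinAt ρ c (Ioi 0) 0) (hρ₀ : ρ 0 = 0) (hL : 0 < L) :
    Tendsto (fun n : ℕ ↦ n * ρ (L / n)) atTop (𝓝 (c * L)) := by
  have hslope := (hasDerivWithinAt_iff_tendsto_slope' (by simp)).1 hρ
  have hstep : Tendsto (fun n : ℕ ↦ L / n) atTop (𝓝[>] 0) :=
    tendsto_nhdsWithin_iff.2 ⟨tendsto_const_div_atTop_nhds_zero_nat L,
      eventually_atTop.2 ⟨1, fun n hn ↦ div_pos hL (by exact_mod_cast hn)⟩⟩
  refine ((hslope.comp hstep).mul_const L).congr' ?_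
  filter_upwards [eventually_ge_atTop 1] with n hn
  have : (n : ℝ) ≠ 0 := by positivity
  simp only [Function.comp_apply, slope_def_field, hρ₀, sub_zero]
  field_simp

theorem ofReal_le_eVariationOn_of_dist_eq {ρ : ℝ → ℝ} {c : ℝ} (hc : 0 ≤ c)
    (hf : ∀ x ∈ Icc a b, ∀ y ∈ Icc a b, x ≤ y → dist (f x) (f y) = ρ (y - x))
    (hρ : HasDerivWithinAt ρ c (Ioi 0) 0) (hρ₀ : ρ 0 = 0) :
    ENNReal.ofReal (c * (b - a)) ≤ eVariationOn f (Icc a b) := by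
  rcases le_or_gt b a with hba | hab
  · simp [ENNReal.ofReal_of_nonpos (mul_nonpos_of_nonneg_of_nonpos hc (sub_nonpos.2 hba))]
  refine le_of_tendsto ((ENNReal.continuous_ofReal.tendsto _).comp
    (tendsto_natCast_mul_of_hasDerivWithinAt hρ hρ₀ (sub_pos.2 hab))) ?_
  filter_upwards [eventually_ge_atTop 1] with n hn
  have hn₀ : (0 : ℝ) < n := by exact_mod_cast hn
  set u : ℕ → ℝ := fun k ↦ a + min k n * ((b - a) / n)
  have hu : Monotone u := fun k l hkl ↦ by
    have : ((min k n : ℕ) : ℝ) ≤ (min l n : ℕ) := by exact_mod_cast min_le_min_right n hkl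
    simp only [u]; gcongr
  have hus : ∀ k, u k ∈ Icc a b := fun k ↦ by
    have : ((min k n : ℕ) : ℝ) ≤ n := by exact_mod_cast min_le_right k n
    refine ⟨le_add_of_nonneg_right (by positivity), ?_⟩
    calc u k ≤ a + n * ((b - a) / n) := by simp only [u]; gcongr
      _ = b := by field_simp; ring
  have hstep : ∀ i ∈ Finset.range n,
      edist (f (u (i + 1))) (f (u i)) = ENNReal.ofReal (ρ ((b - a) / n)) := fun i hi ↦ by
    have hi : i < n := Finset.mem_range.1 hi
    rw [edist_comm, edist_dist, hf _ (hus i) _ (hus (i + 1)) (hu i.le_succ)]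
    simp only [u, min_eq_left hi.le, min_eq_left hi.nat_succ_le]
    push_cast; ring_nf
  calc ENNReal.ofReal (n * ρ ((b - a) / n))
      = ∑ i ∈ Finset.range n, edist (f (u (i + 1))) (f (u i)) := by
        rw [Finset.sum_congr rfl hstep, Finset.sum_const, Finset.card_range, nsmul_eq_mul,
          ENNReal.ofReal_mul hn₀.le, ENNReal.ofReal_natCast]
    _ ≤ eVariationOn f (Icc a b) := eVariationOn.sum_le hu hus

theorem eVariationOn_Icc_eq_of_dist_eq {ρ : ℝ → ℝ} {c : ℝ} (hc : 0 ≤ c)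
    (hf : ∀ x ∈ Icc a b, ∀ y ∈ Icc a b, x ≤ y → dist (f x) (f y) = ρ (y - x))
    (hρ_le : ∀ h, 0 ≤ h → ρ h ≤ c * h) (hρ : HasDerivWithinAt ρ c (Ioi 0) 0) (hρ₀ : ρ 0 = 0) :
    eVariationOn f (Icc a b) = ENNReal.ofReal (c * (b - a)) := by
  have hlip : LipschitzOnWith c.toNNReal f (Icc a b) := by
    refine lipschitzOnWith_iff_dist_le_mul.2 fun x hx y hy ↦ ?_
    rw [coe_toNNReal c hc]
    rcases le_total x y with hxy | hyx
    · rw [hf x hx y hy hxy, dist_comm, Real.dist_eq, abs_of_nonneg (sub_nonneg.2 hxy)]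
      exact hρ_le _ (sub_nonneg.2 hxy)
    · rw [dist_comm, hf y hy x hx hyx, Real.dist_eq, abs_of_nonneg (sub_nonneg.2 hyx)]
      exact hρ_le _ (sub_nonneg.2 hyx)
  refine le_antisymm ?_ (ofReal_le_eVariationOn_of_dist_eq hc hf hρ hρ₀)
  rw [ENNReal.ofReal_mul hc]
  exact hlip.eVariationOn_Icc_le

end ChordLength

theorem cos_arctan_div_mul_sqrt {x : ℝ} (hx : 0 < x) (y : ℝ) :
    cos (arctan (y / x)) * √(x ^ 2 + y ^ 2) = x := by
  have : √(1 + (y / x) ^ 2) = √(x ^ 2 + y ^ 2) / x := by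
    rw [show 1 + (y / x) ^ 2 = (x ^ 2 + y ^ 2) / x ^ 2 by field_simp, sqrt_div' _ (sq_nonneg x),
      sqrt_sq hx.le]
  rw [cos_arctan, this]
  field_simp

theorem sin_arctan_div_mul_sqrt {x : ℝ} (hx : 0 < x) (y : ℝ) :
    sin (arctan (y / x)) * √(x ^ 2 + y ^ 2) = y := by
  rw [← tan_mul_cos (cos_arctan_pos _).ne', tan_arctan, mul_assoc, cos_arctan_div_mul_sqrt hx]
  field_simp

section HyperbolicCircle

variable (R : ℝ)

theorem sinh_mul_cos_lt_cosh (θ : ℝ) : sinh R * cos θ < cosh R := by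
  nlinarith [cosh_sq R, cosh_pos R, sin_sq_add_cos_sq θ, sq_nonneg (sinh R * sin θ),
    sq_nonneg (cosh R - sinh R * cos θ)]

theorem cosh_add_one_sub_sinh_mul_cos_pos (θ : ℝ) : 0 < cosh R + 1 - sinh R * cos θ := by
  linarith [sinh_mul_cos_lt_cosh R θ]

noncomputable def hypCircle (θ : ℝ) : ℍ :=
  .mk (sinh R * sin θ + (cosh R - sinh R * cos θ) * Complex.I)
    (by simpa [Complex.cos_ofReal_re, Complex.sinh_ofReal_re] using sinh_mul_cos_lt_cosh R θ)

variable {R}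

theorem hypCircle_im (θ : ℝ) : (hypCircle R θ).im = cosh R - sinh R * cos θ := by
  simp [hypCircle, Complex.cos_ofReal_re, Complex.sinh_ofReal_re]

theorem dist_coe_hypCircle (s t : ℝ) :
    dist (hypCircle R s : ℂ) (hypCircle R t) = 2 * |sinh R| * |sin ((s - t) / 2)| := by
  have h : (hypCircle R s : ℂ) - hypCircle R t =
      ↑(2 * sinh R * sin ((s - t) / 2)) *
        (↑(cos ((s + t) / 2)) + ↑(sin ((s + t) / 2)) * Complex.I) := by
    apply Complex.ext <;>
      simp only [hypCircle, UpperHalfPlane.coe_mk, Complex.sub_re, Complex.sub_im, Complex.add_re,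
        Complex.add_im, Complex.mul_re, Complex.mul_im, Complex.ofReal_re, Complex.ofReal_im,
        Complex.I_re, Complex.I_im]
    · linear_combination sinh R * sin_sub_sin s t
    · linear_combination -sinh R * cos_sub_cos s t
  rw [dist_eq_norm, h, norm_mul, Complex.ofReal_cos, Complex.ofReal_sin,
    Complex.norm_cos_add_sin_mul_I, mul_one, Complex.norm_real, Real.norm_eq_abs, abs_mul, abs_mul,
    abs_two]

variable (R) in
/-- The polar angle `φ` about `i` of `hypCircle R θ`: `exp (i φ / 2)` is proportional to
`exp (i θ / 2) (cosh R + 1 - sinh R exp (-i θ))`, i.e. to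
`(cosh R + 1 - sinh R) cos (θ / 2) + i (cosh R + 1 + sinh R) sin (θ / 2)`. -/
noncomputable def circleAngle (θ : ℝ) : ℝ :=
  θ + 2 * arctan (sinh R * sin θ / (cosh R + 1 - sinh R * cos θ))

theorem sq_add_sq_eq_mul_hypCircle_im (θ : ℝ) :
    (cosh R + 1 - sinh R * cos θ) ^ 2 + (sinh R * sin θ) ^ 2 =
      2 * (cosh R + 1) * (hypCircle R θ).im := by
  rw [hypCircle_im]
  linear_combination -cosh_sq R + sinh R ^ 2 * sin_sq_add_cos_sq θ

theorem cos_half_circleAngle_mul_sqrt (θ : ℝ) :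
    cos (circleAngle R θ / 2) * √(2 * (cosh R + 1) * (hypCircle R θ).im) =
      (cosh R + 1 - sinh R) * cos (θ / 2) := by
  have hP := cosh_add_one_sub_sinh_mul_cos_pos R θ
  have h := cos_sub θ (θ / 2)
  rw [sub_half] at h
  rw [← sq_add_sq_eq_mul_hypCircle_im, circleAngle, add_div, mul_div_cancel_left₀ _ two_ne_zero,
    cos_add, sub_mul, mul_assoc, mul_assoc, cos_arctan_div_mul_sqrt hP, sin_arctan_div_mul_sqrt hP]
  linear_combination sinh R * h

theorem sin_half_circleAngle_mul_sqrt (θ : ℝ) :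
    sin (circleAngle R θ / 2) * √(2 * (cosh R + 1) * (hypCircle R θ).im) =
      (cosh R + 1 + sinh R) * sin (θ / 2) := by
  have hP := cosh_add_one_sub_sinh_mul_cos_pos R θ
  have h := sin_sub θ (θ / 2)
  rw [sub_half] at h
  rw [← sq_add_sq_eq_mul_hypCircle_im, circleAngle, add_div, mul_div_cancel_left₀ _ two_ne_zero,
    sin_add, add_mul, mul_assoc, mul_assoc, cos_arctan_div_mul_sqrt hP, sin_arctan_div_mul_sqrt hP]
  linear_combination -sinh R * h

theorem sin_half_circleAngle_sub_mul_sqrt (s t : ℝ) :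
    sin ((circleAngle R s - circleAngle R t) / 2) * √((hypCircle R s).im * (hypCircle R t).im) =
      sin ((s - t) / 2) := by
  have hc : 0 < 2 * (cosh R + 1) := by positivity
  have hN : √(2 * (cosh R + 1) * (hypCircle R s).im) * √(2 * (cosh R + 1) * (hypCircle R t).im) =
      2 * (cosh R + 1) * √((hypCircle R s).im * (hypCircle R t).im) := by
    rw [← sqrt_mul (by positivity), show 2 * (cosh R + 1) * (hypCircle R s).im *
      (2 * (cosh R + 1) * (hypCircle R t).im) = (2 * (cosh R + 1)) ^ 2 *
        ((hypCircle R s).im * (hypCircle R t).im) by ring, sqrt_mul (by positivity), sqrt_sq hc.le]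
  have key : sin ((circleAngle R s - circleAngle R t) / 2) *
      (√(2 * (cosh R + 1) * (hypCircle R s).im) * √(2 * (cosh R + 1) * (hypCircle R t).im)) =
      2 * (cosh R + 1) * sin ((s - t) / 2) := by
    rw [sub_div, sin_sub, sub_div s, sin_sub]
    linear_combination
      cos (circleAngle R t / 2) * √(2 * (cosh R + 1) * (hypCircle R t).im) *
          sin_half_circleAngle_mul_sqrt s +
        (cosh R + 1 + sinh R) * sin (s / 2) * cos_half_circleAngle_mul_sqrt t -
        sin (circleAngle R t / 2) * √(2 * (cosh R + 1) * (hypCircle R t).im) *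
          cos_half_circleAngle_mul_sqrt s -
        (cosh R + 1 - sinh R) * cos (s / 2) * sin_half_circleAngle_mul_sqrt t +
        (sin (s / 2) * cos (t / 2) - cos (s / 2) * sin (t / 2)) * cosh_sq R
  rw [hN] at key
  exact mul_left_cancel₀ hc.ne' (by linear_combination key)

theorem dist_hypCircle (s t : ℝ) :
    dist (hypCircle R s) (hypCircle R t) =
      2 * arsinh (|sinh R| * |sin ((circleAngle R s - circleAngle R t) / 2)|) := by
  have hs := (hypCircle R s).im_pos
  have ht := (hypCircle R t).im_pos
  rw [UpperHalfPlane.dist_eq, dist_coe_hypCircle, ← sin_half_circleAngle_sub_mul_sqrt s t, abs_mul,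
    abs_of_nonneg (sqrt_nonneg _)]
  field_simp

theorem hasDerivAt_circleAngle (θ : ℝ) :
    HasDerivAt (circleAngle R) (hypCircle R θ).im⁻¹ θ := by
  have hP := cosh_add_one_sub_sinh_mul_cos_pos R θ
  have hq := sub_pos.2 (sinh_mul_cos_lt_cosh R θ)
  have hw := ((hasDerivAt_sin θ).const_mul (sinh R)).div
    (((hasDerivAt_cos θ).const_mul (sinh R)).const_sub (cosh R + 1)) hP.ne'
  refine ((hasDerivAt_id θ).add (hw.arctan.const_mul 2)).congr_deriv ?_
  rw [Pi.div_apply, hypCircle_im]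
  field_simp
  linear_combination (cosh R + 1 - sinh R * cos θ) *
    (cosh_sq R - sinh R ^ 2 * sin_sq_add_cos_sq θ)

theorem strictMono_circleAngle : StrictMono (circleAngle R) :=
  strictMono_of_hasDerivAt_pos hasDerivAt_circleAngle fun θ ↦ inv_pos.2 (hypCircle R θ).im_pos

theorem abs_circleAngle_sub_self_lt (θ : ℝ) : |circleAngle R θ - θ| < π := by
  rw [circleAngle, add_sub_cancel_left, abs_mul, abs_two, ← lt_div_iff₀' two_pos]
  exact abs_lt.2 ⟨neg_pi_div_two_lt_arctan _, arctan_lt_pi_div_two _⟩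

theorem surjective_circleAngle : Function.Surjective (circleAngle R) := by
  have h := fun θ ↦ abs_lt.1 (abs_circleAngle_sub_self_lt (R := R) θ)
  refine Continuous.surjective
    (continuous_iff_continuousAt.2 fun θ ↦ (hasDerivAt_circleAngle θ).continuousAt)
    (tendsto_atTop_mono (fun θ ↦ ?_) (tendsto_atTop_add_const_right _ (-π) tendsto_id))
    (tendsto_atBot_mono (fun θ ↦ ?_) (tendsto_atBot_add_const_right _ π tendsto_id))
  · linarith [h θ, id_eq θ]
  · linarith [h θ, id_eq θ]

variable (R) in
noncomputable def circleAngleOrderIso : ℝ ≃o ℝ :=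
  StrictMono.orderIsoOfSurjective (circleAngle R) strictMono_circleAngle surjective_circleAngle

@[simp]
theorem circleAngle_zero : circleAngle R 0 = 0 := by simp [circleAngle]

@[simp]
theorem circleAngle_two_pi : circleAngle R (2 * π) = 2 * π := by simp [circleAngle]

@[simp]
theorem circleAngleOrderIso_apply (θ : ℝ) : circleAngleOrderIso R θ = circleAngle R θ := rfl

theorem circleAngle_circleAngleOrderIso_symm (x : ℝ) :
    circleAngle R ((circleAngleOrderIso R).symm x) = x :=
  (circleAngleOrderIso R).apply_symm_apply x

theorem dist_hypCircle_circleAngleOrderIso_symm (hR : 0 ≤ R) {x y : ℝ} (hxy : x ≤ y)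
    (hyx : y - x ≤ 2 * π) :
    dist (hypCircle R ((circleAngleOrderIso R).symm x))
        (hypCircle R ((circleAngleOrderIso R).symm y)) =
      2 * arsinh (sinh R * sin ((y - x) / 2)) := by
  rw [dist_comm, dist_hypCircle, circleAngle_circleAngleOrderIso_symm,
    circleAngle_circleAngleOrderIso_symm, abs_of_nonneg (sinh_nonneg_iff.2 hR),
    abs_of_nonneg (sin_nonneg_of_nonneg_of_le_pi (by linarith) (by linarith))]

end HyperbolicCircle

theorem two_mul_arsinh_mul_sin_half_le {b x : ℝ} (hb : 0 ≤ b) (hx : 0 ≤ x) :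
    2 * arsinh (b * sin (x / 2)) ≤ b * x := by
  have hsin : arsinh (b * sin (x / 2)) ≤ arsinh (b * (x / 2)) :=
    arsinh_le_arsinh.2 (mul_le_mul_of_nonneg_left (sin_le (by positivity)) hb)
  have hself : arsinh (b * (x / 2)) ≤ b * (x / 2) := by
    rw [← sinh_le_sinh, sinh_arsinh]
    exact self_le_sinh_iff.2 (by positivity)
  linarith

theorem hasDerivAt_two_mul_arsinh_mul_sin_half (b : ℝ) :
    HasDerivAt (fun x ↦ 2 * arsinh (b * sin (x / 2))) b 0 := by
  have h := ((((hasDerivAt_id (0 : ℝ)).div_const 2).sin).const_mul b).arsinh.const_mul 2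
  exact h.congr_deriv (by simp; ring)

/-- The hyperbolic length (total metric variation) of the hyperbolic circle of radius
`R > 0` centered at `i ∈ ℍ`, parametrized as the Euclidean circle of radius `sinh R`
centered at `(cosh R)·i`, equals `2π·sinh R`. -/
theorem stmt_5 (R : ℝ) (hR : 0 < R) (γ : ℝ → ℍ)
    (hγ : ∀ θ : ℝ, (γ θ : ℂ) =
      Real.sinh R * Real.sin θ + (Real.cosh R - Real.sinh R * Real.cos θ) * Complex.I) :
    eVariationOn γ (Set.Icc 0 (2 * π)) = ENNReal.ofReal (2 * π * Real.sinh R) := by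
  obtain rfl : γ = hypCircle R := funext fun θ ↦ UpperHalfPlane.ext (hγ θ)
  set e := circleAngleOrderIso R
  have hreparam : hypCircle R = (hypCircle R ∘ e.symm) ∘ e := by
    ext1 θ; simp
  rw [hreparam, eVariationOn.comp_eq_of_monotoneOn _ _ (e.monotone.monotoneOn _), e.image_Icc,
    circleAngleOrderIso_apply, circleAngleOrderIso_apply, circleAngle_zero, circleAngle_two_pi]
  have hc := sinh_nonneg_iff.2 hR.le
  convert eVariationOn_Icc_eq_of_dist_eq hc (fun x hx y hy hxy ↦ ?_)
    (fun _ ↦ two_mul_arsinh_mul_sin_half_le hc)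
    (hasDerivAt_two_mul_arsinh_mul_sin_half _).hasDerivWithinAt
    (by simp) using 2
  · ring
  · exact dist_hypCircle_circleAngleOrderIso_symm hR.le hxy (by linarith [hx.1, hy.2])
end
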